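/- arXiv:2504.04067 — 2 statements merged into one kernel-verified Lean document; each statement's English description precedes it below -/
import Mathlib

section
/- For any Hermitian matrix M and any positive semidefinite matrix σ with unit trace such that the support of M is contained in the support of σ, the trace norm of M is at most the Frobenius norm of σ^{-1/4} M σ^{-1/4} (where the inverse is the Moore–Penrose pseudoinverse). -/
open scoped BigOperators ComplexOrder

/-- Apply a real function to a Hermitian matrix via its spectral decomposition
(zero if the matrix is not Hermitian). -/
noncomputable def matFun {n : Type*} [Fintype n] [DecidableEq n]
    (A : Matrix n n ℂ) (f : ℝ → ℝ) : Matrix n n ℂ :=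
  if h : A.IsHermitian then h.cfc f else 0

/-- Moore–Penrose pseudoinverse power of a Hermitian matrix: eigenvalue `0` is sent to `0`,
nonzero eigenvalues `t` to `t ^ r`. -/
noncomputable def pinvPow {n : Type*} [Fintype n] [DecidableEq n]
    (A : Matrix n n ℂ) (r : ℝ) : Matrix n n ℂ :=
  matFun A (fun t => if t = 0 then 0 else Real.rpow t r)

/-- Matrix logarithm (base 2) on the support of a Hermitian matrix. -/
noncomputable def matLog2 {n : Type*} [Fintype n] [DecidableEq n]
    (A : Matrix n n ℂ) : Matrix n n ℂ :=
  matFun A (fun t => if t = 0 then 0 else Real.logb 2 t)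

/-- Schatten 1-norm (trace norm) of a complex matrix: the trace of `√(Aᴴ A)`. -/
noncomputable def traceNorm {n : Type*} [Fintype n] [DecidableEq n]
    (A : Matrix n n ℂ) : ℝ :=
  (((Matrix.posSemidef_conjTranspose_mul_self A).1.eigenvectorUnitary.1 *
      Matrix.diagonal ((fun x : ℝ => (x : ℂ)) ∘ (√·) ∘ (Matrix.posSemidef_conjTranspose_mul_self A).1.eigenvalues) *
      (star (Matrix.posSemidef_conjTranspose_mul_self A).1.eigenvectorUnitary : Matrix n n ℂ)).trace).re

/-- Schatten 2-norm (Frobenius norm) of a complex matrix. -/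
noncomputable def frobNorm {n : Type*} [Fintype n] [DecidableEq n]
    (A : Matrix n n ℂ) : ℝ :=
  Real.sqrt (((A.conjTranspose * A).trace).re)

/-- Squared Frobenius norm. -/
noncomputable def frobSq {n : Type*} [Fintype n] [DecidableEq n]
    (A : Matrix n n ℂ) : ℝ :=
  ((A.conjTranspose * A).trace).re

/-- Schatten ∞-norm (operator norm): square root of the largest eigenvalue of `Aᴴ A`. -/
noncomputable def matOpNorm {n : Type*} [Fintype n] [DecidableEq n]
    (A : Matrix n n ℂ) : ℝ :=
  Real.sqrt (⨆ i, (Matrix.posSemidef_conjTranspose_mul_self A).1.eigenvalues i)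

/-!
Let `P = sign M`, `S = σ^{1/4}` and `N = σ^{-1/4} M σ^{-1/4}`. Then `Tr (P M) = ‖M‖₁`, and the
support hypothesis makes `σ^{1/4} σ^{-1/4}` act as the identity on both sides of `M`, so
`M = S N S`. Hence `‖M‖₁ = Re Tr ((S P S)ᴴ N) ≤ ‖S P S‖₂ ‖N‖₂` by Cauchy–Schwarz, and a second
Cauchy–Schwarz gives `‖S P S‖₂ ≤ ‖P σ^{1/2}‖₂ ≤ ‖σ^{1/2}‖₂ = (Tr σ)^{1/2} = 1`, using `P² ≤ 1`.
-/

open Matrix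
open scoped MatrixOrder

section Frobenius

variable {n : Type*} [Fintype n]

lemma trace_conjTranspose_mul_eq_inner_vec (A B : Matrix n n ℂ) :
    (Aᴴ * B).trace = inner ℂ (WithLp.toLp 2 A.vec) (WithLp.toLp 2 B.vec) := by
  rw [EuclideanSpace.inner_eq_star_dotProduct, dotProduct_comm, ← star_vec_dotProduct_vec]

lemma re_trace_le_re_trace {A B : Matrix n n ℂ} (h : A ≤ B) : A.trace.re ≤ B.trace.re := by
  have := (Complex.nonneg_iff.mp (le_iff.mp h).trace_nonneg).1
  rwa [trace_sub, Complex.sub_re, sub_nonneg] at this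

variable [DecidableEq n]

lemma frobNorm_nonneg (A : Matrix n n ℂ) : 0 ≤ frobNorm A := Real.sqrt_nonneg _

lemma frobNorm_eq_norm_vec (A : Matrix n n ℂ) : frobNorm A = ‖WithLp.toLp 2 A.vec‖ := by
  rw [frobNorm, trace_conjTranspose_mul_eq_inner_vec, inner_self_eq_norm_sq_to_K]
  norm_cast
  exact Real.sqrt_sq (norm_nonneg _)

lemma frobNorm_sq (A : Matrix n n ℂ) : frobNorm A ^ 2 = (Aᴴ * A).trace.re := by
  rw [frobNorm, Real.sq_sqrt]
  exact (Complex.nonneg_iff.mp (posSemidef_conjTranspose_mul_self A).trace_nonneg).1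

lemma frobNorm_conjTranspose (A : Matrix n n ℂ) : frobNorm Aᴴ = frobNorm A := by
  rw [frobNorm, frobNorm, conjTranspose_conjTranspose, trace_mul_comm]

lemma re_trace_conjTranspose_mul_le (A B : Matrix n n ℂ) :
    (Aᴴ * B).trace.re ≤ frobNorm A * frobNorm B := by
  rw [trace_conjTranspose_mul_eq_inner_vec, frobNorm_eq_norm_vec, frobNorm_eq_norm_vec]
  exact re_inner_le_norm (𝕜 := ℂ) _ _

lemma frobNorm_mul_le_of_star_mul_self_le_one {P : Matrix n n ℂ} (hP : star P * P ≤ 1)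
    (B : Matrix n n ℂ) : frobNorm (P * B) ≤ frobNorm B := by
  have hle : (P * B)ᴴ * (P * B) ≤ Bᴴ * B := by
    simpa only [star_eq_conjTranspose, conjTranspose_mul, mul_one, mul_assoc] using
      star_left_conjugate_le_conjugate hP B
  exact Real.sqrt_le_sqrt (re_trace_le_re_trace hle)

lemma frobNorm_mul_mul_le {R P : Matrix n n ℂ} (hR : R.IsHermitian) (hP : P.IsHermitian) :
    frobNorm (R * P * R) ≤ frobNorm (P * (R * R)) := by
  have htr : ((R * P * R)ᴴ * (R * P * R)).trace =
      ((P * (R * R))ᴴᴴ * (P * (R * R))).trace := by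
    rw [conjTranspose_conjTranspose, conjTranspose_mul, conjTranspose_mul,
      hR.eq, hP.eq,
      show R * (P * R) * (R * P * R) = R * (P * R * R * P * R) by simp only [mul_assoc],
      trace_mul_comm]
    simp only [mul_assoc]
  refine (pow_le_pow_iff_left₀ (frobNorm_nonneg _) (frobNorm_nonneg _) two_ne_zero).mp ?_
  calc frobNorm (R * P * R) ^ 2
      = ((P * (R * R))ᴴᴴ * (P * (R * R))).trace.re := by
        rw [frobNorm_sq, htr]
    _ ≤ frobNorm (P * (R * R))ᴴ * frobNorm (P * (R * R)) :=
        re_trace_conjTranspose_mul_le _ _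
    _ = frobNorm (P * (R * R)) ^ 2 := by rw [frobNorm_conjTranspose, sq]

lemma re_trace_mul_conj_le {P R : Matrix n n ℂ} (hP : P.IsHermitian) (hP1 : P * P ≤ 1)
    (hR : R.IsHermitian) (N : Matrix n n ℂ) :
    (P * (R * N * R)).trace.re ≤ frobNorm (R * R) * frobNorm N := by
  have htr : (P * (R * N * R)).trace = ((R * P * R)ᴴ * N).trace := by
    rw [conjTranspose_mul, conjTranspose_mul, hR.eq, hP.eq,
      show P * (R * N * R) = P * R * N * R by simp only [mul_assoc], trace_mul_comm]
    simp only [mul_assoc]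
  have hP1' : star P * P ≤ 1 := by rwa [star_eq_conjTranspose, hP.eq]
  calc (P * (R * N * R)).trace.re
      ≤ frobNorm (R * P * R) * frobNorm N := htr ▸ re_trace_conjTranspose_mul_le _ _
    _ ≤ frobNorm (P * (R * R)) * frobNorm N := by
        gcongr
        · exact frobNorm_nonneg N
        · exact frobNorm_mul_mul_le hR hP
    _ ≤ frobNorm (R * R) * frobNorm N := by
        gcongr
        · exact frobNorm_nonneg N
        · exact frobNorm_mul_le_of_star_mul_self_le_one hP1' _

end Frobenius

section FunctionalCalculus

variable {n : Type*} [Fintype n] [DecidableEq n]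

lemma Matrix.continuousOn_spectrum (f : ℝ → ℝ) (A : Matrix n n ℂ) :
    ContinuousOn f (spectrum ℝ A) :=
  finite_real_spectrum.continuousOn f

lemma Matrix.isHermitian_cfc (f : ℝ → ℝ) (A : Matrix n n ℂ) : (cfc f A).IsHermitian :=
  isHermitian_iff_isSelfAdjoint.mpr (cfc_predicate f A)

lemma pinvPow_eq_cfc {A : Matrix n n ℂ} (hA : A.IsHermitian) (r : ℝ) :
    pinvPow A r = cfc (fun t : ℝ => if t = 0 then 0 else t ^ r) A := by
  rw [pinvPow, matFun, dif_pos hA, hA.cfc_eq]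
  rfl

lemma traceNorm_eq_re_trace_cfc_abs {A : Matrix n n ℂ} (hA : A.IsHermitian) :
    traceNorm A = (cfc (fun t : ℝ => |t|) A).trace.re := by
  have hsq : Aᴴ * A = cfc (fun t : ℝ => t * t) A := by
    rw [cfc_mul _ _ A (Matrix.continuousOn_spectrum _ A) (Matrix.continuousOn_spectrum _ A),
      cfc_id' ℝ A, hA.eq]
  have habs : cfc (fun t : ℝ => |t|) A = cfc (fun t : ℝ => √(t * t)) A :=
    cfc_congr fun t _ => (Real.sqrt_mul_self_eq_abs t).symm
  rw [habs, cfc_comp' Real.sqrt (fun t : ℝ => t * t) A, ← hsq,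
    (posSemidef_conjTranspose_mul_self A).1.cfc_eq]
  rfl

lemma cfc_sign_mul_self {A : Matrix n n ℂ} (hA : A.IsHermitian) :
    cfc (fun t : ℝ => (SignType.sign t : ℝ)) A * A = cfc (fun t : ℝ => |t|) A := by
  nth_rewrite 2 [← cfc_id' ℝ A]
  rw [← cfc_mul _ _ A (Matrix.continuousOn_spectrum _ A)]
  exact cfc_congr fun t _ => sign_mul_self t

lemma cfc_sign_mul_cfc_sign_le_one (A : Matrix n n ℂ) :
    cfc (fun t : ℝ => (SignType.sign t : ℝ)) A * cfc (fun t : ℝ => (SignType.sign t : ℝ)) A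
      ≤ 1 := by
  rw [← cfc_mul _ _ A (Matrix.continuousOn_spectrum _ A) (Matrix.continuousOn_spectrum _ A)]
  refine cfc_le_one _ A fun t _ => ?_
  rcases lt_trichotomy t 0 with h | h | h <;> simp [h]

noncomputable def supportProj (A : Matrix n n ℂ) : Matrix n n ℂ :=
  cfc (fun t : ℝ => if t = 0 then 0 else 1) A

lemma self_mul_supportProj {A : Matrix n n ℂ} (hA : A.IsHermitian) : A * supportProj A = A := by
  nth_rewrite 1 [← cfc_id' ℝ A]
  rw [supportProj, ← cfc_mul _ _ A (Matrix.continuousOn_spectrum _ A)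
    (Matrix.continuousOn_spectrum _ A)]
  conv_rhs => rw [← cfc_id' ℝ A]
  exact cfc_congr fun t _ => by by_cases h : t = 0 <;> simp [h]

lemma mul_supportProj_of_ker_le {A M : Matrix n n ℂ} (hA : A.IsHermitian)
    (hker : ∀ v, A *ᵥ v = 0 → M *ᵥ v = 0) : M * supportProj A = M := by
  have hzero : M * (1 - supportProj A) = 0 := by
    refine ext_of_mulVec_single fun i => ?_
    rw [← mulVec_mulVec, zero_mulVec]
    refine hker _ ?_
    rw [mulVec_mulVec, mul_sub, mul_one, self_mul_supportProj hA, sub_self, zero_mulVec]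
  rwa [mul_sub, mul_one, sub_eq_zero, eq_comm] at hzero

lemma supportProj_mul_of_ker_le {A M : Matrix n n ℂ} (hA : A.IsHermitian) (hM : M.IsHermitian)
    (hker : ∀ v, A *ᵥ v = 0 → M *ᵥ v = 0) : supportProj A * M = M := by
  have h := congrArg conjTranspose (mul_supportProj_of_ker_le hA hker)
  rwa [conjTranspose_mul, hM.eq, supportProj, (Matrix.isHermitian_cfc _ A).eq] at h

lemma cfc_rpow_mul_pinvPow {A : Matrix n n ℂ} (hA : A.PosSemidef) (r : ℝ) :
    cfc (fun t : ℝ => t ^ r) A * pinvPow A (-r) = supportProj A := by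
  rw [pinvPow_eq_cfc hA.1, ← cfc_mul _ _ A (Matrix.continuousOn_spectrum _ A)
    (Matrix.continuousOn_spectrum _ A), supportProj]
  refine cfc_congr fun t ht => ?_
  rcases (spectrum_nonneg_of_nonneg hA.nonneg ht).eq_or_lt with h | h
  · simp [← h]
  · simp [h.ne', ← Real.rpow_add h]

lemma cfc_rpow_mul_cfc_rpow {A : Matrix n n ℂ} (hA : A.PosSemidef) {r s : ℝ} (h : r + s ≠ 0) :
    cfc (fun t : ℝ => t ^ r) A * cfc (fun t : ℝ => t ^ s) A =
      cfc (fun t : ℝ => t ^ (r + s)) A := by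
  rw [← cfc_mul _ _ A (Matrix.continuousOn_spectrum _ A) (Matrix.continuousOn_spectrum _ A)]
  exact cfc_congr fun t ht => (Real.rpow_add' (spectrum_nonneg_of_nonneg hA.nonneg ht) h).symm

lemma frobNorm_cfc_rpow_half {A : Matrix n n ℂ} (hA : A.PosSemidef) :
    frobNorm (cfc (fun t : ℝ => t ^ (1 / 2 : ℝ)) A) = √A.trace.re := by
  rw [frobNorm, (Matrix.isHermitian_cfc _ A).eq, cfc_rpow_mul_cfc_rpow hA (by norm_num),
    show (1 / 2 + 1 / 2 : ℝ) = 1 by norm_num]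
  simp only [Real.rpow_one]
  rw [cfc_id' ℝ A]

end FunctionalCalculus

/-- Matrix weighted Cauchy–Schwarz: for a Hermitian matrix `M` and a unit-trace positive
semidefinite weighting matrix `σ` with `supp M ⊆ supp σ`,
`‖M‖₁ ≤ ‖σ^{-1/4} M σ^{-1/4}‖₂`. -/
theorem stmt0 {d : ℕ} (M σ : Matrix (Fin d) (Fin d) ℂ)
    (hM : M.IsHermitian) (hσ : σ.PosSemidef) (hTr : σ.trace = 1)
    (hsupp : ∀ v : Fin d → ℂ, σ.mulVec v = 0 → M.mulVec v = 0) :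
    traceNorm M ≤ frobNorm (pinvPow σ (-(1/4 : ℝ)) * M * pinvPow σ (-(1/4 : ℝ))) := by
  set T := pinvPow σ (-(1/4 : ℝ))
  set S := cfc (fun t : ℝ => t ^ (1/4 : ℝ)) σ
  set P := cfc (fun t : ℝ => (SignType.sign t : ℝ)) M
  have hST : S * T = supportProj σ := cfc_rpow_mul_pinvPow hσ _
  have hTS : T * S = supportProj σ := by
    rw [← hST, show T = _ from pinvPow_eq_cfc hσ.1 _]
    exact (cfc_commute_cfc _ _ σ).eq
  have hM_eq : S * (T * M * T) * S = M := by
    rw [show S * (T * M * T) * S = S * T * M * (T * S) by simp only [mul_assoc], hST, hTS,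
      supportProj_mul_of_ker_le hσ.1 hM hsupp, mul_supportProj_of_ker_le hσ.1 hsupp]
  have hSS : frobNorm (S * S) = 1 := by
    rw [cfc_rpow_mul_cfc_rpow hσ (by norm_num), show (1/4 + 1/4 : ℝ) = 1/2 by norm_num,
      frobNorm_cfc_rpow_half hσ, hTr, Complex.one_re, Real.sqrt_one]
  calc traceNorm M = (P * M).trace.re := by
        rw [traceNorm_eq_re_trace_cfc_abs hM, cfc_sign_mul_self hM]
    _ = (P * (S * (T * M * T) * S)).trace.re := by rw [hM_eq]
    _ ≤ frobNorm (S * S) * frobNorm (T * M * T) :=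
        re_trace_mul_conj_le (Matrix.isHermitian_cfc _ M) (cfc_sign_mul_cfc_sign_le_one M)
          (Matrix.isHermitian_cfc _ σ) _
    _ = frobNorm (T * M * T) := by rw [hSS, one_mul]
end

section
/- McDiarmid's inequality (method of bounded differences): if f: X₁ × ⋯ × X_k → ℝ satisfies the bounded differences property with constants c₁, …, c_k, and x₁, …, x_k are independent with distributions q^{X_i}, then Pr[f(x₁,…,x_k) ≥ E[f] + δ] ≤ exp(−2δ²/(c₁² + ⋯ + c_k²)) for all δ > 0. -/
/-!
Let `t ≥ 0`. Fixing the first coordinate `a` and averaging `f` over the others gives a function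
`m a` whose range has width at most `c 0`, so Hoeffding's lemma bounds the moment generating
function of `m - E f` by `exp (t² c₀² / 8)`; by induction on `k`, the fluctuation of
`f (a, ·)` around `m a` contributes `exp (t² (c₁² + ⋯ + c_{k-1}²) / 8)`. Hence
`E exp (t (f - E f)) ≤ exp (t² ∑ cᵢ² / 8)`, and Markov's inequality for `exp (t (f - E f))` with
`t = 4δ / ∑ cᵢ²` gives the bound.
-/

open Real MeasureTheory ProbabilityTheory Finset

theorem hoeffding_sum_mul_exp_le {α : Type*} [Fintype α] [Nonempty α] {w g : α → ℝ} {c : ℝ}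
    (hw0 : ∀ a, 0 ≤ w a) (hw1 : ∑ a, w a = 1) (hg : ∀ a b, g a - g b ≤ c) (t : ℝ) :
    ∑ a, w a * exp (t * (g a - ∑ b, w b * g b)) ≤ exp (t ^ 2 * c ^ 2 / 8) := by
  let _ : MeasurableSpace α := ⊤
  have hsum : ∑ a, ENNReal.ofReal (w a) = 1 := by
    rw [← ENNReal.ofReal_sum_of_nonneg fun a _ => hw0 a, hw1, ENNReal.ofReal_one]
  let μ := (PMF.ofFintype _ hsum).toMeasure
  have integral_eq (h : α → ℝ) : ∫ a, h a ∂μ = ∑ a, w a * h a := by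
    simp [μ, PMF.integral_eq_sum, ENNReal.toReal_ofReal (hw0 _)]
  obtain ⟨lo, -, hlo⟩ := exists_min_image univ g univ_nonempty
  obtain ⟨hi, -, hhi⟩ := exists_max_image univ g univ_nonempty
  have hoeffding := (hasSubgaussianMGF_of_mem_Icc (μ := μ) (a := g lo) (b := g hi)
    Measurable.of_discrete.aemeasurable
    (ae_of_all _ fun a => ⟨hlo a (mem_univ a), hhi a (mem_univ a)⟩)).mgf_le t
  rw [mgf, integral_eq, integral_eq] at hoeffding
  refine hoeffding.trans (exp_le_exp.2 ?_)
  have hwidth : (g hi - g lo) ^ 2 ≤ c ^ 2 :=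
    pow_le_pow_left₀ (sub_nonneg.2 (hhi lo (mem_univ lo))) (hg hi lo) 2
  push_cast
  rw [div_pow, Real.norm_eq_abs, sq_abs]
  linarith [mul_le_mul_of_nonneg_left hwidth (sq_nonneg t)]

theorem sum_sum_mul_exp_sub_le {α β : Type*} [Fintype α] [Nonempty α] [Fintype β]
    {w : α → ℝ} {v : β → ℝ} (hw0 : ∀ a, 0 ≤ w a) (hw1 : ∑ a, w a = 1)
    (hv0 : ∀ b, 0 ≤ v b) (hv1 : ∑ b, v b = 1) {F : α → β → ℝ} {c C t : ℝ}
    (hF : ∀ a a' b, F a b - F a' b ≤ c)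
    (hinner : ∀ a, ∑ b, v b * exp (t * (F a b - ∑ b', v b' * F a b')) ≤ exp (t ^ 2 * C / 8)) :
    ∑ a, ∑ b, w a * v b * exp (t * (F a b - ∑ a', ∑ b', w a' * v b' * F a' b')) ≤
      exp (t ^ 2 * (c ^ 2 + C) / 8) := by
  set m : α → ℝ := fun a => ∑ b, v b * F a b
  have hmean : ∑ a', ∑ b', w a' * v b' * F a' b' = ∑ a, w a * m a := by
    simp only [m, mul_sum, mul_assoc]
  have hm : ∀ a a', m a - m a' ≤ c := fun a a' =>
    calc m a - m a' = ∑ b, v b * (F a b - F a' b) := by simp only [m, mul_sub, sum_sub_distrib]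
      _ ≤ ∑ b, v b * c := sum_le_sum fun b _ => mul_le_mul_of_nonneg_left (hF a a' b) (hv0 b)
      _ = c := by rw [← sum_mul, hv1, one_mul]
  calc ∑ a, ∑ b, w a * v b * exp (t * (F a b - ∑ a', ∑ b', w a' * v b' * F a' b'))
      = ∑ a, w a * exp (t * (m a - ∑ a', w a' * m a')) *
          ∑ b, v b * exp (t * (F a b - m a)) := by
        refine sum_congr rfl fun a _ => ?_
        rw [hmean, mul_sum]
        refine sum_congr rfl fun b _ => ?_
        rw [show t * (F a b - ∑ a', w a' * m a') =
          t * (m a - ∑ a', w a' * m a') + t * (F a b - m a) by ring, exp_add]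
        ring
    _ ≤ ∑ a, w a * exp (t * (m a - ∑ a', w a' * m a')) * exp (t ^ 2 * C / 8) :=
        sum_le_sum fun a _ => mul_le_mul_of_nonneg_left (hinner a) (by positivity [hw0 a])
    _ ≤ exp (t ^ 2 * c ^ 2 / 8) * exp (t ^ 2 * C / 8) := by
        rw [← sum_mul]
        gcongr
        exact hoeffding_sum_mul_exp_le hw0 hw1 hm t
    _ = exp (t ^ 2 * (c ^ 2 + C) / 8) := by rw [← exp_add]; ring_nf

theorem sum_prod_mul_eq_sum_sum_cons {n : ℕ} {X : Fin (n + 1) → Type*} [∀ i, Fintype (X i)]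
    (q : ∀ i, X i → ℝ) (G : (∀ i, X i) → ℝ) :
    ∑ x : ∀ i, X i, (∏ i, q i (x i)) * G x =
      ∑ a, ∑ b : ∀ i : Fin n, X i.succ, q 0 a * (∏ i, q i.succ (b i)) * G (Fin.cons a b) := by
  rw [← (Fin.consEquiv X).sum_comp, Fintype.sum_prod_type]
  simp [Fin.consEquiv, Fin.prod_univ_succ]

theorem sum_prod_eq_one {ι : Type*} [Fintype ι] [DecidableEq ι] {X : ι → Type*}
    [∀ i, Fintype (X i)] {q : ∀ i, X i → ℝ} (hq1 : ∀ i, ∑ a, q i a = 1) :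
    ∑ x : ∀ i, X i, ∏ i, q i (x i) = 1 := by
  rw [← Fintype.prod_sum, prod_eq_one fun i _ => hq1 i]

theorem sum_prod_mul_exp_sub_le {k : ℕ} {X : Fin k → Type*} [∀ i, Fintype (X i)]
    [∀ i, Nonempty (X i)] {q : ∀ i, X i → ℝ} (hq0 : ∀ i a, 0 ≤ q i a)
    (hq1 : ∀ i, ∑ a, q i a = 1) {f : (∀ i, X i) → ℝ} {c : Fin k → ℝ}
    (hbd : ∀ x i x', |f x - f (Function.update x i x')| ≤ c i) (t : ℝ) :
    ∑ x, (∏ i, q i (x i)) * exp (t * (f x - ∑ z, (∏ i, q i (z i)) * f z)) ≤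
      exp (t ^ 2 * (∑ i, c i ^ 2) / 8) := by
  induction k with
  | zero => simp
  | succ n ih =>
    simp only [sum_prod_mul_eq_sum_sum_cons q, Fin.sum_univ_succ (f := fun i => c i ^ 2)]
    refine sum_sum_mul_exp_sub_le (hq0 0) (hq1 0)
      (fun b => prod_nonneg fun i _ => hq0 i.succ (b i)) (sum_prod_eq_one fun i => hq1 i.succ)
      (fun a a' b => ?_) (fun a => ?_)
    · rw [← Fin.update_cons_zero a b a']
      exact (le_abs_self _).trans (hbd _ 0 a')
    · refine ih (fun i => hq0 i.succ) (fun i => hq1 i.succ) (fun b i x' => ?_)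
      rw [Fin.cons_update]
      exact hbd _ i.succ x'

theorem sum_indicator_le_exp_mul_sum_mul_exp {α : Type*} [Fintype α] {w g : α → ℝ}
    (hw0 : ∀ a, 0 ≤ w a) (m δ : ℝ) {t : ℝ} (ht : 0 ≤ t) :
    ∑ a, {b | m + δ ≤ g b}.indicator w a ≤ exp (-(t * δ)) * ∑ a, w a * exp (t * (g a - m)) := by
  rw [mul_sum]
  refine sum_le_sum fun a _ => ?_
  by_cases ha : a ∈ {b | m + δ ≤ g b}
  · rw [Set.indicator_of_mem ha, mul_left_comm, ← exp_add]
    refine le_mul_of_one_le_right (hw0 a) (one_le_exp ?_)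
    have hgap : m + δ ≤ g a := ha
    nlinarith [mul_nonneg ht (sub_nonneg.2 hgap)]
  · rw [Set.indicator_of_notMem ha]
    positivity [hw0 a]

theorem stmt2_general {k : ℕ} (X : Fin k → Type*) [∀ i, Fintype (X i)] [∀ i, Nonempty (X i)]
    (f : (∀ i, X i) → ℝ) (c : Fin k → ℝ)
    (hbd : ∀ (x : ∀ i, X i) (i : Fin k) (x' : X i),
      |f x - f (Function.update x i x')| ≤ c i)
    (q : ∀ i, X i → ℝ) (hq0 : ∀ i xi, 0 ≤ q i xi) (hq1 : ∀ i, ∑ xi, q i xi = 1)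
    (δ : ℝ) (hδ : 0 < δ) :
    ∑ x : ∀ i, X i,
        Set.indicator
          {y : ∀ i, X i | (∑ z : ∀ i, X i, (∏ i, q i (z i)) * f z) + δ ≤ f y}
          (fun y => ∏ i, q i (y i)) x
      ≤ Real.exp (-2 * δ ^ 2 / ∑ i, (c i) ^ 2) := by
  set S := ∑ i, c i ^ 2
  set μ := ∑ z : ∀ i, X i, (∏ i, q i (z i)) * f z
  -- if `S = 0` then `t = 4 * δ / 0 = 0`, and both sides of `hexponent` are `0`
  set t := 4 * δ / S
  have hexponent : -(t * δ) + t ^ 2 * S / 8 = -2 * δ ^ 2 / S := by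
    rcases eq_or_ne S 0 with hS | hS
    · simp [t, hS]
    · simp only [t]; field_simp; ring
  calc _ ≤ exp (-(t * δ)) * ∑ x, (∏ i, q i (x i)) * exp (t * (f x - μ)) :=
        sum_indicator_le_exp_mul_sum_mul_exp (fun x => prod_nonneg fun i _ => hq0 i (x i)) _ _
          (by positivity)
    _ ≤ exp (-(t * δ)) * exp (t ^ 2 * S / 8) := by
        gcongr
        exact sum_prod_mul_exp_sub_le hq0 hq1 hbd t
    _ = exp (-2 * δ ^ 2 / S) := by rw [← exp_add, hexponent]

/-- McDiarmid's inequality (method of bounded differences): if `f` satisfies the bounded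
differences property with constants `c i`, and the coordinates are drawn independently from
distributions `q i`, then the probability that `f` exceeds its expectation by `δ` is at most
`exp (-2 δ² / ∑ i, (c i)²)`. -/
theorem stmt2 {k : ℕ} (X : Fin k → Type*) [∀ i, Fintype (X i)] [∀ i, Nonempty (X i)]
    (f : (∀ i, X i) → ℝ) (c : Fin k → ℝ) (hc : ∀ i, 0 < c i)
    (hbd : ∀ (x : ∀ i, X i) (i : Fin k) (x' : X i),
      |f x - f (Function.update x i x')| ≤ c i)
    (q : ∀ i, X i → ℝ) (hq0 : ∀ i xi, 0 ≤ q i xi) (hq1 : ∀ i, ∑ xi, q i xi = 1)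
    (δ : ℝ) (hδ : 0 < δ) :
    ∑ x : ∀ i, X i,
        Set.indicator
          {y : ∀ i, X i | (∑ z : ∀ i, X i, (∏ i, q i (z i)) * f z) + δ ≤ f y}
          (fun y => ∏ i, q i (y i)) x
      ≤ Real.exp (-2 * δ ^ 2 / ∑ i, (c i) ^ 2) :=
  stmt2_general X f c hbd q hq0 hq1 δ hδ
end
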